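/- Let (m_1,r_1),…,(m_n,r_n) with m_i ∈ ℝ², r_i > 0, and let H_v : S¹ → ℕ be the sum of the signal functions. Then H_v is properly upper semicontinuous if and only if for all indices 1 ≤ i ≤ j ≤ n, no point x ∈ ∂h_{(m_i,r_i)} ∩ ∂h_{(m_j,r_j)} is an isolated point of the set {y ∈ S¹ : ‖y − m_i‖ ≤ r_i and ‖y − m_j‖ ≤ r_j}. -/

import Mathlib

noncomputable section

open scoped BigOperators
open Classical

/-- The unit circle `S¹` in the plane (modeled as `ℂ ≅ ℝ²` with the Euclidean norm). -/
def S1 : Set ℂ := {x : ℂ | ‖x‖ = 1}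

/-- The signal function `h_{(m,r)}`: indicator of the closed disk of center `m`, radius `r`. -/
def signal (m : ℂ) (r : ℝ) (x : ℂ) : ℕ := if ‖x - m‖ ≤ r then 1 else 0

/-- The boundary trace `∂h_{(m,r)} = {x ∈ S¹ : ‖x − m‖ = r}`. -/
def bTrace (m : ℂ) (r : ℝ) : Set ℂ := {x : ℂ | ‖x‖ = 1 ∧ ‖x - m‖ = r}

/-- The sum `H_v` of the signal functions of the disk data `v = ((m_i, r_i))_{i<n}`. -/
def Hsum {n : ℕ} (v : Fin n → ℂ × ℝ) (x : ℂ) : ℕ := ∑ i, signal (v i).1 (v i).2 x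

/-- Rotation of the plane by angle `t` about the origin. -/
def rot (t : ℝ) (x : ℂ) : ℂ := Complex.exp (t * Complex.I) * x

/-- `H(x⁺) = a`: `H` equals `a` just after `x` (counterclockwise). -/
def rightVal (H : ℂ → ℕ) (x : ℂ) (a : ℕ) : Prop :=
  ∃ δ > (0 : ℝ), ∀ t : ℝ, 0 < t → t < δ → H (rot t x) = a

/-- `H(x⁻) = b`: `H` equals `b` just before `x`. -/
def leftVal (H : ℂ → ℕ) (x : ℂ) (b : ℕ) : Prop :=
  ∃ δ > (0 : ℝ), ∀ t : ℝ, -δ < t → t < 0 → H (rot t x) = b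

/-- `H` is properly upper semicontinuous on `S¹`: at each point both one-sided limits
exist and the value equals their maximum. -/
def ProperlyUSC (H : ℂ → ℕ) : Prop :=
  ∀ x ∈ S1, ∃ a b : ℕ, rightVal H x a ∧ leftVal H x b ∧ H x = max a b

/-- `H* = max_{S¹} H`. -/
def maxOnS1 (H : ℂ → ℕ) : ℕ := sSup (H '' S1)

/-- `H_* = min_{S¹} H`. -/
def minOnS1 (H : ℂ → ℕ) : ℕ := sInf (H '' S1)

/-- The superlevel set `{x ∈ S¹ : H(x) ≥ k}`. -/
def superlevel (H : ℂ → ℕ) (k : ℕ) : Set ℂ := {x ∈ S1 | k ≤ H x}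

/-- Number of connected components of a subset of the plane. -/
def numCC (A : Set ℂ) : ℕ := Nat.card (ConnectedComponents ↥A)

/-- `τ(H) = Σ_{k=H_*+1}^{H*} (c_k(H) − 1)`. -/
def tau (H : ℂ → ℕ) : ℕ :=
  ∑ k ∈ Finset.Icc (minOnS1 H + 1) (maxOnS1 H), (numCC (superlevel H k) - 1)

/-- `ρ` for the degrees-of-freedom count. -/
def rho (m : ℂ) (r : ℝ) : ℕ :=
  if bTrace m r = ∅ then 3
  else if (bTrace m r).ncard = 1 ∨ (bTrace m r).ncard = 2 then 1
  else 0

/-- `N`-degrees of freedom of a decomposition with `n ≤ N` signals. -/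
def DoF (N : ℕ) {n : ℕ} (v : Fin n → ℂ × ℝ) : ℕ :=
  3 * (N - n) + ∑ i, rho (v i).1 (v i).2

/-!
Along the rotation `t ↦ rot t x`, membership in a closed disk `D(m, r)` is the sign condition
`‖rot t x - m‖ ^ 2 - r ^ 2 ≤ 0` on a real-analytic function of `t`. Such a function either
vanishes near `0` or has no zeros on a punctured neighbourhood, so by the intermediate value
theorem every signal is eventually constant on each side of `x`; since the disks are closed,
these one-sided values never exceed the value at `x`. Hence `H_v(x⁺)` and `H_v(x⁻)` always
exist, and `H_v(x) = max (H_v(x⁺), H_v(x⁻))` fails exactly when some signal `i` drops to `0`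
just after `x` and some signal `j` just before it. Then `x` lies on both boundary circles,
and no point of `S¹ ∩ D_i ∩ D_j` other than `x` is close to `x`; conversely such an isolated
common boundary point forces both drops.
-/

open Filter Topology Set

theorem IsPreconnected.nonpos_iff_of_ne_zero {X : Type*} [TopologicalSpace X] {s : Set X}
    (hs : IsPreconnected s) {F : X → ℝ} (hF : ContinuousOn F s) (hF0 : ∀ t ∈ s, F t ≠ 0)
    {a b : X} (ha : a ∈ s) (hb : b ∈ s) : F a ≤ 0 ↔ F b ≤ 0 := by
  have key : ∀ {a b}, a ∈ s → b ∈ s → F a ≤ 0 → F b ≤ 0 := by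
    intro a b ha hb hFa
    by_contra! hFb
    obtain ⟨c, hc, hc0⟩ := hs.intermediate_value ha hb hF ⟨hFa, hFb.le⟩
    exact hF0 c hc hc0
  exact ⟨key ha hb, key hb ha⟩

theorem AnalyticAt.exists_eventually_nonpos_iff_nhdsGT {F : ℝ → ℝ} {a : ℝ}
    (hF : AnalyticAt ℝ F a) : ∃ p : Prop, ∀ᶠ t in 𝓝[>] a, (F t ≤ 0 ↔ p) := by
  rcases hF.eventually_eq_zero_or_eventually_ne_zero with hzero | hne
  · exact ⟨True, nhdsWithin_le_nhds (hzero.mono fun t ht => by simp [ht])⟩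
  · have hgood : ∀ᶠ t in 𝓝[>] a, F t ≠ 0 ∧ ContinuousAt F t :=
      (hne.filter_mono (nhdsWithin_mono a fun t ht => ne_of_gt ht)).and
        (nhdsWithin_le_nhds (hF.eventually_analyticAt.mono fun t ht => ht.continuousAt))
    obtain ⟨b, hab, hb⟩ := (nhdsGT_basis a).eventually_iff.mp hgood
    refine ⟨F ((a + b) / 2) ≤ 0, mem_of_superset (Ioo_mem_nhdsGT hab) fun t ht => ?_⟩
    exact isPreconnected_Ioo.nonpos_iff_of_ne_zero
      (fun t ht => (hb ht).2.continuousWithinAt) (fun t ht => (hb ht).1) ht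
      ⟨by linarith, by linarith⟩

lemma Filter.eventually_iff_of_eventually_eq {α β : Type*} {l : Filter α} [l.NeBot]
    {f : α → β} {b : β} (hf : ∀ᶠ t in l, f t = b) {p : β → Prop} :
    (∀ᶠ t in l, p (f t)) ↔ p b :=
  (eventually_congr (hf.mono fun t ht => by rw [ht])).trans eventually_const

lemma max_sum_eq_sum_iff {ι M : Type*} [Fintype ι] [AddCommMonoid M] [LinearOrder M]
    [IsOrderedCancelAddMonoid M] {f g h : ι → M} (hf : f ≤ h) (hg : g ≤ h) :
    max (∑ i, f i) (∑ i, g i) = ∑ i, h i ↔ f = h ∨ g = h := by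
  have sum_eq_iff : ∀ {k : ι → M}, k ≤ h → (∑ i, k i = ∑ i, h i ↔ k = h) := fun hk =>
    (Finset.sum_eq_sum_iff_of_le fun i _ => hk i).trans (by simp [funext_iff])
  rw [← sum_eq_iff hf, ← sum_eq_iff hg, max_eq_iff]
  have hfs := Finset.sum_le_sum fun i (_ : i ∈ Finset.univ) => hf i
  have hgs := Finset.sum_le_sum fun i (_ : i ∈ Finset.univ) => hg i
  constructor
  · rintro (⟨h1, -⟩ | ⟨h1, -⟩) <;> simp [h1]
  · rintro (h1 | h1)
    · exact Or.inl ⟨h1, h1 ▸ hgs⟩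
    · exact Or.inr ⟨h1, h1 ▸ hfs⟩

lemma signal_eq_one_iff {m y : ℂ} {r : ℝ} : signal m r y = 1 ↔ ‖y - m‖ ≤ r := by
  unfold signal; split_ifs <;> simp_all

lemma signal_le_one (m : ℂ) (r : ℝ) (y : ℂ) : signal m r y ≤ 1 := by
  unfold signal; split_ifs <;> omega

lemma eventually_signal_eq_one {m y : ℂ} {r : ℝ} (h : ‖y - m‖ < r) :
    ∀ᶠ z in 𝓝 y, signal m r z = 1 := by
  filter_upwards [Metric.isOpen_ball.mem_nhds (mem_ball_iff_norm.mpr h)] with z hz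
  exact signal_eq_one_iff.mpr (mem_ball_iff_norm.mp hz).le

lemma eventually_signal_eq_zero {m y : ℂ} {r : ℝ} (h : r < ‖y - m‖) :
    ∀ᶠ z in 𝓝 y, signal m r z = 0 := by
  filter_upwards [((continuous_sub_right m).norm.tendsto y).eventually_const_lt h] with z hz
  simp [signal, hz]

lemma le_signal_of_tendsto {l : Filter ℝ} [l.NeBot] {γ : ℝ → ℂ} {m x : ℂ} {r : ℝ} {e : ℕ}
    (hγ : Tendsto γ l (𝓝 x)) (he : ∀ᶠ t in l, signal m r (γ t) = e) : e ≤ signal m r x := by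
  rcases le_or_gt ‖x - m‖ r with hin | hout
  · obtain ⟨t, ht⟩ := he.exists
    rw [signal_eq_one_iff.mpr hin, ← ht]
    exact signal_le_one m r (γ t)
  · obtain ⟨t, ht, ht0⟩ := (he.and (hγ.eventually (eventually_signal_eq_zero hout))).exists
    omega

lemma norm_sub_eq_of_tendsto {l : Filter ℝ} [l.NeBot] {γ : ℝ → ℂ} {m x : ℂ} {r : ℝ} {e : ℕ}
    (hγ : Tendsto γ l (𝓝 x)) (he : ∀ᶠ t in l, signal m r (γ t) = e)
    (hlt : e < signal m r x) : ‖x - m‖ = r := by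
  have hx : signal m r x = 1 := le_antisymm (signal_le_one m r x) (by omega)
  refine (signal_eq_one_iff.mp hx).antisymm (not_lt.mp fun hin => ?_)
  obtain ⟨t, ht, ht1⟩ := (he.and (hγ.eventually (eventually_signal_eq_one hin))).exists
  omega

lemma AnalyticAt.exists_eventually_signal_eq {γ : ℝ → ℂ} {a : ℝ} (hγ : AnalyticAt ℝ γ a)
    (m : ℂ) (r : ℝ) : ∃ e, ∀ᶠ t in 𝓝[>] a, signal m r (γ t) = e := by
  rcases lt_or_ge r 0 with hr | hr
  · exact ⟨0, Eventually.of_forall fun t => by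
      simp [signal, (hr.trans_le (norm_nonneg _)).not_ge]⟩
  have hre : AnalyticAt ℝ (fun t => (γ t - m).re) a :=
    (Complex.reCLM.analyticAt _).comp (hγ.sub analyticAt_const)
  have him : AnalyticAt ℝ (fun t => (γ t - m).im) a :=
    (Complex.imCLM.analyticAt _).comp (hγ.sub analyticAt_const)
  have hF : AnalyticAt ℝ (fun t => ‖γ t - m‖ ^ 2 - r ^ 2) a := by
    simp only [← Complex.normSq_eq_norm_sq, Complex.normSq_apply]
    exact ((hre.mul hre).add (him.mul him)).sub analyticAt_const
  obtain ⟨p, hp⟩ := hF.exists_eventually_nonpos_iff_nhdsGT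
  refine ⟨if p then 1 else 0, hp.mono fun t ht => ?_⟩
  rw [signal, ← ht, sub_nonpos, sq_le_sq₀ (norm_nonneg _) hr]

def signals {ι : Type*} (v : ι → ℂ × ℝ) (y : ℂ) : ι → ℕ := fun i => signal (v i).1 (v i).2 y

lemma Hsum_eq_sum_signals {n : ℕ} (v : Fin n → ℂ × ℝ) (y : ℂ) :
    Hsum v y = ∑ i, signals v y i := rfl

lemma AnalyticAt.exists_eventually_signals_eq {ι : Type*} [Finite ι] (v : ι → ℂ × ℝ)
    {γ : ℝ → ℂ} {a : ℝ} (hγ : AnalyticAt ℝ γ a) :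
    ∃ e : ι → ℕ, ∀ᶠ t in 𝓝[>] a, signals v (γ t) = e := by
  choose e he using fun i => hγ.exists_eventually_signal_eq (v i).1 (v i).2
  exact ⟨e, (eventually_all.mpr he).mono fun t ht => funext ht⟩

lemma rot_zero (x : ℂ) : rot 0 x = x := by simp [rot]

lemma norm_rot (t : ℝ) (x : ℂ) : ‖rot t x‖ = ‖x‖ := by
  simp [rot, Complex.norm_exp_ofReal_mul_I]

lemma analyticAt_rot (x : ℂ) (a : ℝ) : AnalyticAt ℝ (fun t => rot t x) a :=
  (analyticAt_cexp.restrictScalars.comp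
    ((Complex.ofRealCLM.analyticAt a).mul analyticAt_const)).mul analyticAt_const

lemma continuous_rot (x : ℂ) : Continuous fun t : ℝ => rot t x :=
  continuous_iff_continuousAt.mpr fun a => (analyticAt_rot x a).continuousAt

lemma tendsto_rot_nhds (x : ℂ) : Tendsto (fun t : ℝ => rot t x) (𝓝 0) (𝓝 x) := by
  simpa [rot_zero] using (continuous_rot x).tendsto 0

lemma rot_eq_self_iff {x : ℂ} (hx : x ≠ 0) {t : ℝ} (ht : t ∈ Ioc (-Real.pi) Real.pi) :
    rot t x = x ↔ t = 0 := by
  refine ⟨fun h => ?_, fun h => h ▸ rot_zero x⟩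
  have hexp : Complex.exp (t * Complex.I) = 1 := mul_eq_right₀ hx |>.mp h
  have := Complex.arg_exp_mul_I t
  rwa [hexp, Complex.arg_one, (toIocMod_eq_self _).mpr (by simpa [add_comm, two_mul] using ht),
    eq_comm] at this

lemma rot_arg_div {x y : ℂ} (hx : x ≠ 0) (hxy : ‖y‖ = ‖x‖) :
    rot (Complex.arg (y / x)) x = y := by
  have h := Complex.norm_mul_exp_arg_mul_I (y / x)
  rw [norm_div, hxy, div_self (norm_ne_zero_iff.mpr hx), Complex.ofReal_one, one_mul] at h
  rw [rot, h, div_mul_cancel₀ _ hx]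

lemma tendsto_arg_div_self {x : ℂ} (hx : x ≠ 0) :
    Tendsto (fun y => Complex.arg (y / x)) (𝓝 x) (𝓝 0) := by
  have h : Tendsto (fun y => y / x) (𝓝 x) (𝓝 1) := by
    simpa [div_self hx] using (continuous_id.div_const x).tendsto x
  exact Complex.arg_one ▸ (Complex.continuousAt_arg Complex.one_mem_slitPlane).tendsto.comp h

/-- Near `x`, the points of the circle are exactly the small rotations of `x`. -/
lemma isolated_in_circle_iff_eventually_rot {x : ℂ} (hx : x ∈ S1) (P : ℂ → Prop) :
    (∃ ε > (0 : ℝ), ∀ y ∈ {y ∈ S1 | P y}, dist y x < ε → y = x) ↔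
      ∀ᶠ t in 𝓝[≠] 0, ¬ P (rot t x) := by
  have hx0 : x ≠ 0 := norm_ne_zero_iff.mp (by rw [hx]; exact one_ne_zero)
  constructor
  · rintro ⟨ε, hε, hiso⟩
    have hnear : ∀ᶠ t in 𝓝 (0 : ℝ), dist (rot t x) x < ε ∧ t ∈ Ioc (-Real.pi) Real.pi :=
      (Metric.tendsto_nhds.mp (tendsto_rot_nhds x) ε hε).and
        (mem_of_superset (Ioo_mem_nhds (neg_lt_zero.mpr Real.pi_pos) Real.pi_pos)
          Ioo_subset_Ioc_self)
    filter_upwards [self_mem_nhdsWithin, nhdsWithin_le_nhds hnear] with t ht0 ⟨hdist, hπ⟩ hP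
    exact ht0 ((rot_eq_self_iff hx0 hπ).mp (hiso _ ⟨(norm_rot t x).trans hx, hP⟩ hdist))
  · intro h
    have hnear : ∀ᶠ y in 𝓝 x, Complex.arg (y / x) ≠ 0 → ¬ P (rot (Complex.arg (y / x)) x) :=
      (tendsto_arg_div_self hx0).eventually (eventually_nhdsWithin_iff.mp h)
    obtain ⟨ε, hε, hball⟩ := Metric.eventually_nhds_iff.mp hnear
    refine ⟨ε, hε, fun y ⟨hy, hPy⟩ hdist => ?_⟩
    have hrot : rot (Complex.arg (y / x)) x = y := rot_arg_div hx0 (hy.trans hx.symm)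
    by_contra hne
    refine hball hdist (fun harg => hne ?_) (by rwa [hrot])
    rw [← hrot, harg, rot_zero]

lemma rightVal_iff_eventually {H : ℂ → ℕ} {x : ℂ} {a : ℕ} :
    rightVal H x a ↔ ∀ᶠ t in 𝓝[>] 0, H (rot t x) = a := by
  simp [rightVal, (nhdsGT_basis (0 : ℝ)).eventually_iff, and_imp]

lemma leftVal_iff_eventually {H : ℂ → ℕ} {x : ℂ} {b : ℕ} :
    leftVal H x b ↔ ∀ᶠ t in 𝓝[<] 0, H (rot t x) = b := by
  rw [(nhdsLT_basis (0 : ℝ)).eventually_iff]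
  constructor
  · rintro ⟨δ, hδ, h⟩
    exact ⟨-δ, neg_lt_zero.mpr hδ, fun t ht => h t ht.1 ht.2⟩
  · rintro ⟨c, hc, h⟩
    exact ⟨-c, neg_pos.mpr hc, fun t ht ht' => h ⟨by rwa [neg_neg] at ht, ht'⟩⟩

lemma exists_eventually_signals_rot_eq {n : ℕ} (v : Fin n → ℂ × ℝ) (x : ℂ) :
    ∃ ep em : Fin n → ℕ, (∀ᶠ t in 𝓝[>] 0, signals v (rot t x) = ep) ∧
      ∀ᶠ t in 𝓝[<] 0, signals v (rot t x) = em := by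
  obtain ⟨ep, hep⟩ := (analyticAt_rot x 0).exists_eventually_signals_eq v
  obtain ⟨em, hem⟩ :=
    ((analyticAt_rot x _).comp analyticAt_id.neg).exists_eventually_signals_eq v
  have hneg : Tendsto Neg.neg (𝓝[<] (0 : ℝ)) (𝓝[>] 0) := by
    simpa using tendsto_neg_nhdsLT (a := (0 : ℝ))
  exact ⟨ep, em, hep, (hneg.eventually hem).mono fun t ht => by simpa using ht⟩

section SidedSignals

variable {n : ℕ} {v : Fin n → ℂ × ℝ} {x : ℂ} {l : Filter ℝ} {e ep em : Fin n → ℕ}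

lemma signals_le_of_eventually [l.NeBot] (hl : l ≤ 𝓝 0)
    (he : ∀ᶠ t in l, signals v (rot t x) = e) : e ≤ signals v x := fun i =>
  le_signal_of_tendsto ((tendsto_rot_nhds x).mono_left hl) (he.mono fun _ ht => congrFun ht i)

lemma mem_bTrace_of_lt_signals [l.NeBot] (hl : l ≤ 𝓝 0) (hx : x ∈ S1)
    (he : ∀ᶠ t in l, signals v (rot t x) = e) {i : Fin n} (hi : e i < signals v x i) :
    x ∈ bTrace (v i).1 (v i).2 :=
  ⟨hx, norm_sub_eq_of_tendsto ((tendsto_rot_nhds x).mono_left hl)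
    (he.mono fun _ ht => congrFun ht i) hi⟩

lemma exists_mem_bTrace_of_ne_signals [l.NeBot] (hl : l ≤ 𝓝 0) (hx : x ∈ S1)
    (he : ∀ᶠ t in l, signals v (rot t x) = e) (hne : e ≠ signals v x) :
    ∃ i, e i = 0 ∧ x ∈ bTrace (v i).1 (v i).2 := by
  obtain ⟨i, hi⟩ := Function.ne_iff.mp hne
  have hlt := (signals_le_of_eventually hl he i).lt_of_ne hi
  have hle := signal_le_one (v i).1 (v i).2 x
  exact ⟨i, by simp only [signals] at hlt; omega, mem_bTrace_of_lt_signals hl hx he hlt⟩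

lemma properlyUSC_at_iff (hep : ∀ᶠ t in 𝓝[>] 0, signals v (rot t x) = ep)
    (hem : ∀ᶠ t in 𝓝[<] 0, signals v (rot t x) = em) :
    (∃ a b, rightVal (Hsum v) x a ∧ leftVal (Hsum v) x b ∧ Hsum v x = max a b) ↔
      ep = signals v x ∨ em = signals v x := by
  have hR : ∀ a, rightVal (Hsum v) x a ↔ ∑ i, ep i = a := fun a =>
    rightVal_iff_eventually.trans (eventually_iff_of_eventually_eq hep (p := (∑ i, · i = a)))
  have hL : ∀ b, leftVal (Hsum v) x b ↔ ∑ i, em i = b := fun b =>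
    leftVal_iff_eventually.trans (eventually_iff_of_eventually_eq hem (p := (∑ i, · i = b)))
  simp only [hR, hL, exists_and_left, exists_eq_left']
  rw [eq_comm, Hsum_eq_sum_signals, max_sum_eq_sum_iff (signals_le_of_eventually
    nhdsWithin_le_nhds hep) (signals_le_of_eventually nhdsWithin_le_nhds hem)]

lemma isolated_inter_disks_iff (hx : x ∈ S1) (hep : ∀ᶠ t in 𝓝[>] 0, signals v (rot t x) = ep)
    (hem : ∀ᶠ t in 𝓝[<] 0, signals v (rot t x) = em) (i j : Fin n) :
    (∃ ε > (0 : ℝ), ∀ y ∈ {y ∈ S1 | ‖y - (v i).1‖ ≤ (v i).2 ∧ ‖y - (v j).1‖ ≤ (v j).2},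
        dist y x < ε → y = x) ↔
      ¬ (ep i = 1 ∧ ep j = 1) ∧ ¬ (em i = 1 ∧ em j = 1) := by
  rw [isolated_in_circle_iff_eventually_rot hx, ← nhdsLT_sup_nhdsGT, eventually_sup, and_comm]
  simp only [← signal_eq_one_iff]
  exact and_congr (eventually_iff_of_eventually_eq hep (p := fun e => ¬ (e i = 1 ∧ e j = 1)))
    (eventually_iff_of_eventually_eq hem (p := fun e => ¬ (e i = 1 ∧ e j = 1)))

end SidedSignals

theorem stmt7_general {n : ℕ} (v : Fin n → ℂ × ℝ) :
    ProperlyUSC (Hsum v) ↔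
      ∀ i j : Fin n, i ≤ j →
        ∀ x ∈ bTrace (v i).1 (v i).2 ∩ bTrace (v j).1 (v j).2,
          ¬ ∃ ε > (0 : ℝ),
            ∀ y ∈ {y ∈ S1 | ‖y - (v i).1‖ ≤ (v i).2 ∧ ‖y - (v j).1‖ ≤ (v j).2},
              dist y x < ε → y = x := by
  constructor
  · rintro husc i j - x ⟨⟨hx, hxi⟩, -, hxj⟩ hiso
    obtain ⟨ep, em, hep, hem⟩ := exists_eventually_signals_rot_eq v x
    have hσi : signals v x i = 1 := signal_eq_one_iff.mpr hxi.le
    have hσj : signals v x j = 1 := signal_eq_one_iff.mpr hxj.le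
    rw [isolated_inter_disks_iff hx hep hem] at hiso
    rcases (properlyUSC_at_iff hep hem).mp (husc x hx) with h | h
    · exact hiso.1 (h ▸ ⟨hσi, hσj⟩)
    · exact hiso.2 (h ▸ ⟨hσi, hσj⟩)
  · intro hcond x hx
    obtain ⟨ep, em, hep, hem⟩ := exists_eventually_signals_rot_eq v x
    rw [properlyUSC_at_iff hep hem]
    by_contra! ⟨hR, hL⟩
    obtain ⟨i, hi, hxi⟩ := exists_mem_bTrace_of_ne_signals nhdsWithin_le_nhds hx hep hR
    obtain ⟨j, hj, hxj⟩ := exists_mem_bTrace_of_ne_signals nhdsWithin_le_nhds hx hem hL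
    rcases le_total i j with hij | hij
    · exact hcond i j hij x ⟨hxi, hxj⟩
        ((isolated_inter_disks_iff hx hep hem i j).mpr (by simp [hi, hj]))
    · exact hcond j i hij x ⟨hxj, hxi⟩
        ((isolated_inter_disks_iff hx hep hem j i).mpr (by simp [hi, hj]))

/-- `H_v` is properly u.s.c. iff for all `i ≤ j`, no common boundary
point of the `i`-th and `j`-th signals is an isolated point of the intersection of
their closed disks with `S¹`. -/
theorem stmt7 {n : ℕ} (v : Fin n → ℂ × ℝ) (hr : ∀ i, 0 < (v i).2) :
    ProperlyUSC (Hsum v) ↔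
      ∀ i j : Fin n, i ≤ j →
        ∀ x ∈ bTrace (v i).1 (v i).2 ∩ bTrace (v j).1 (v j).2,
          ¬ ∃ ε > (0 : ℝ),
            ∀ y ∈ {y ∈ S1 | ‖y - (v i).1‖ ≤ (v i).2 ∧ ‖y - (v j).1‖ ≤ (v j).2},
              dist y x < ε → y = x :=
  stmt7_general v
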